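/- arXiv:1901.10979 — 8 statements merged into one kernel-verified Lean document; each statement's English description precedes it below -/
import Mathlib

section
/- Let A be a Frobenius algebra over a field K. A right ideal I of A is checkable (i.e., I = ann_r(Av) for some v ∈ A) if and only if ann_l(I) is a principal left ideal of A. -/
/-- A finite-dimensional algebra `A` over `K` is Frobenius if there is a `K`-linear
functional whose kernel contains no nonzero left or right ideal. -/
def IsFrobeniusAlgebra (K : Type*) [Field K] (A : Type*) [Ring A] [Algebra K A] : Prop :=
  ∃ lam : A →ₗ[K] K,
    (∀ I : Submodule A A, (I : Set A) ⊆ {a : A | lam a = 0} → I = ⊥) ∧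
    (∀ I : Submodule Aᵐᵒᵖ A, (I : Set A) ⊆ {a : A | lam a = 0} → I = ⊥)

section Aux

open Module

variable (K : Type*) {A : Type*} [Field K] [Ring A] [Algebra K A]

/-- The bilinear form associated to a linear functional. -/
noncomputable def frobForm (lam : A →ₗ[K] K) : LinearMap.BilinForm K A :=
  LinearMap.mk₂ K (fun a b => lam (a * b))
    (fun a a' b => by simp [add_mul])
    (fun c a b => by simp [smul_mul_assoc])
    (fun a b b' => by simp [mul_add])
    (fun c a b => by simp [mul_smul_comm])

@[simp] lemma frobForm_apply (lam : A →ₗ[K] K) (a b : A) :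
    frobForm K lam a b = lam (a * b) := rfl

/-- A right ideal, viewed as a `K`-submodule. -/
def rIdealK (I : Submodule Aᵐᵒᵖ A) : Submodule K A where
  carrier := I
  add_mem' := I.add_mem
  zero_mem' := I.zero_mem
  smul_mem' := fun k x hx => by
    have : k • x = (MulOpposite.op (algebraMap K A k)) • x := by
      rw [MulOpposite.smul_eq_mul_unop, MulOpposite.unop_op, Algebra.smul_def, Algebra.commutes]
    rw [this]
    exact I.smul_mem _ hx

@[simp] lemma mem_rIdealK (I : Submodule Aᵐᵒᵖ A) (x : A) : x ∈ rIdealK K I ↔ x ∈ I := Iff.rfl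

/-- A left ideal, viewed as a `K`-submodule. -/
def lIdealK (I : Submodule A A) : Submodule K A where
  carrier := I
  add_mem' := I.add_mem
  zero_mem' := I.zero_mem
  smul_mem' := fun k x hx => by
    have : k • x = (algebraMap K A k) • x := by
      rw [Algebra.smul_def]; rfl
    rw [this]
    exact I.smul_mem _ hx

@[simp] lemma mem_lIdealK (I : Submodule A A) (x : A) : x ∈ lIdealK K I ↔ x ∈ I := Iff.rfl

/-- Left annihilator of a set, as a `K`-submodule. -/
def annlK (S : Set A) : Submodule K A where
  carrier := {a | ∀ x ∈ S, a * x = 0}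
  add_mem' := fun {a b} ha hb x hx => by rw [add_mul, ha x hx, hb x hx, add_zero]
  zero_mem' := fun x _ => zero_mul x
  smul_mem' := fun k a ha x hx => by rw [smul_mul_assoc, ha x hx, smul_zero]

@[simp] lemma mem_annlK (S : Set A) (a : A) : a ∈ annlK K S ↔ ∀ x ∈ S, a * x = 0 := Iff.rfl

/-- Right annihilator of a set, as a `K`-submodule. -/
def annrK (S : Set A) : Submodule K A where
  carrier := {a | ∀ x ∈ S, x * a = 0}
  add_mem' := fun {a b} ha hb x hx => by rw [mul_add, ha x hx, hb x hx, add_zero]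
  zero_mem' := fun x _ => mul_zero x
  smul_mem' := fun k a ha x hx => by rw [mul_smul_comm, ha x hx, smul_zero]

@[simp] lemma mem_annrK (S : Set A) (a : A) : a ∈ annrK K S ↔ ∀ x ∈ S, x * a = 0 := Iff.rfl

variable {lam : A →ₗ[K] K}
variable (hL : ∀ I : Submodule A A, (I : Set A) ⊆ {a : A | lam a = 0} → I = ⊥)
variable (hR : ∀ I : Submodule Aᵐᵒᵖ A, (I : Set A) ⊆ {a : A | lam a = 0} → I = ⊥)

include hR in
lemma frob_sepL : (frobForm K lam).SeparatingLeft := by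
  intro a ha
  have hspan : Submodule.span Aᵐᵒᵖ {a} = ⊥ := by
    apply hR
    intro x hx
    rw [SetLike.mem_coe, Submodule.mem_span_singleton] at hx
    obtain ⟨r, rfl⟩ := hx
    have : r • a = a * r.unop := MulOpposite.smul_eq_mul_unop r a
    rw [Set.mem_setOf_eq, this]
    exact ha r.unop
  have : a ∈ Submodule.span Aᵐᵒᵖ ({a} : Set A) := Submodule.mem_span_singleton_self a
  rw [hspan, Submodule.mem_bot] at this
  exact this

include hL in
lemma frob_sepR : (frobForm K lam).SeparatingRight := by
  intro a ha
  have hspan : Submodule.span A {a} = ⊥ := by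
    apply hL
    intro x hx
    rw [SetLike.mem_coe, Submodule.mem_span_singleton] at hx
    obtain ⟨r, rfl⟩ := hx
    exact ha r
  have : a ∈ Submodule.span A ({a} : Set A) := Submodule.mem_span_singleton_self a
  rw [hspan, Submodule.mem_bot] at this
  exact this

variable [FiniteDimensional K A]

lemma finrank_dualAnnihilator' (W : Submodule K A) :
    finrank K W.dualAnnihilator + finrank K W = finrank K A := by
  have h : Module.finrank K (A ⧸ W) = Module.finrank K W.dualAnnihilator :=
    LinearEquiv.finrank_eq (Subspace.quotEquivAnnihilator W)
  rw [← h]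
  exact Submodule.finrank_quotient_add_finrank W

include hL hR in
/-- dimension of the left orthogonal (= left annihilator when the submodule is a right ideal). -/
lemma finrank_lorth (W : Submodule K A)
    (hW : ∀ a : A, (∀ x ∈ W, lam (a * x) = 0) → ∀ x ∈ W, a * x = 0) :
    finrank K (annlK K (W : Set A)) + finrank K W = finrank K A := by
  have hB : (frobForm K lam (A := A)).Nondegenerate := ⟨frob_sepL K hR, frob_sepR K hL⟩
  set e := (frobForm K lam (A := A)).toDual hB with he
  have hcomap : annlK K (W : Set A) = W.dualAnnihilator.comap e.toLinearMap := by
    ext a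
    simp only [mem_annlK, Submodule.mem_comap, Submodule.mem_dualAnnihilator]
    constructor
    · intro h w hw
      have : e a w = lam (a * w) := rfl
      rw [LinearEquiv.coe_coe, this, h w hw, map_zero]
    · intro h
      apply hW
      intro x hx
      have : e a x = lam (a * x) := rfl
      rw [← this]
      exact h x hx
  rw [hcomap, Submodule.comap_equiv_eq_map_symm, LinearEquiv.finrank_map_eq]
  exact finrank_dualAnnihilator' K _
  
include hL hR in
lemma finrank_rorth (W : Submodule K A)
    (hW : ∀ a : A, (∀ x ∈ W, lam (x * a) = 0) → ∀ x ∈ W, x * a = 0) :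
    finrank K (annrK K (W : Set A)) + finrank K W = finrank K A := by
  have hB : (frobForm K lam (A := A)).flip.Nondegenerate :=
    LinearMap.BilinForm.Nondegenerate.flip ⟨frob_sepL K hR, frob_sepR K hL⟩
  set e := (frobForm K lam (A := A)).flip.toDual hB with he
  have hcomap : annrK K (W : Set A) = W.dualAnnihilator.comap e.toLinearMap := by
    ext a
    simp only [mem_annrK, Submodule.mem_comap, Submodule.mem_dualAnnihilator]
    constructor
    · intro h w hw
      have : e a w = lam (w * a) := rfl
      rw [LinearEquiv.coe_coe, this, h w hw, map_zero]
    · intro h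
      apply hW
      intro x hx
      have : e a x = lam (x * a) := rfl
      rw [← this]
      exact h x hx
  rw [hcomap, Submodule.comap_equiv_eq_map_symm, LinearEquiv.finrank_map_eq]
  exact finrank_dualAnnihilator' K _

include hL hR in
/-- Double annihilator for right ideals. -/
lemma double_ann_right (I : Submodule Aᵐᵒᵖ A) :
    annrK K (annlK K (I : Set A) : Set A) = rIdealK K I := by
  -- a ∈ annl I, λ(a*x)=0 for all x ∈ I ⇒ a*x=0 : property used for finrank_lorth
  have hsepL := frob_sepL K hR (lam := lam)
  have hsepR := frob_sepR K hL (lam := lam)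
  have h1 : finrank K (annlK K ((rIdealK K I : Submodule K A) : Set A)) + finrank K (rIdealK K I)
      = finrank K A := by
    apply finrank_lorth K hL hR
    intro a ha x hx
    apply hsepL
    intro b
    rw [frobForm_apply, mul_assoc]
    exact ha (x * b) (I.smul_mem (MulOpposite.op b) hx)
  -- annlK K I is a left ideal
  have h2 : finrank K (annrK K ((annlK K ((rIdealK K I : Submodule K A) : Set A) : Submodule K A) : Set A))
      + finrank K (annlK K ((rIdealK K I : Submodule K A) : Set A)) = finrank K A := by
    apply finrank_rorth K hL hR
    intro a ha x hx
    apply hsepR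
    intro b
    rw [frobForm_apply, ← mul_assoc]
    apply ha (b * x)
    intro y hy
    rw [mul_assoc]
    rw [mem_annlK] at hx
    rw [hx y hy, mul_zero]
  have hIset : ((rIdealK K I : Submodule K A) : Set A) = (I : Set A) := rfl
  rw [hIset] at h1 h2
  have hle : rIdealK K I ≤ annrK K (annlK K (I : Set A) : Set A) := by
    intro x hx c hc
    exact hc x hx
  have hfr : finrank K (annrK K ((annlK K (I : Set A) : Submodule K A) : Set A))
      = finrank K (rIdealK K I) := by omega
  exact (Submodule.eq_of_le_of_finrank_le hle (le_of_eq hfr)).symm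

include hL hR in
/-- Double annihilator for left ideals. -/
lemma double_ann_left (J : Submodule A A) :
    annlK K (annrK K (J : Set A) : Set A) = lIdealK K J := by
  have hsepL := frob_sepL K hR (lam := lam)
  have hsepR := frob_sepR K hL (lam := lam)
  have h1 : finrank K (annrK K ((lIdealK K J : Submodule K A) : Set A)) + finrank K (lIdealK K J)
      = finrank K A := by
    apply finrank_rorth K hL hR
    intro a ha x hx
    apply hsepR
    intro b
    rw [frobForm_apply, ← mul_assoc]
    exact ha (b * x) (J.smul_mem b hx)
  have h2 : finrank K (annlK K ((annrK K ((lIdealK K J : Submodule K A) : Set A) : Submodule K A) : Set A))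
      + finrank K (annrK K ((lIdealK K J : Submodule K A) : Set A)) = finrank K A := by
    apply finrank_lorth K hL hR
    intro a ha x hx
    apply hsepL
    intro b
    rw [frobForm_apply, mul_assoc]
    apply ha (x * b)
    intro y hy
    rw [← mul_assoc]
    rw [mem_annrK] at hx
    rw [hx y hy, zero_mul]
  have hJset : ((lIdealK K J : Submodule K A) : Set A) = (J : Set A) := rfl
  rw [hJset] at h1 h2
  have hle : lIdealK K J ≤ annlK K (annrK K (J : Set A) : Set A) := by
    intro x hx c hc
    exact hc x hx
  have hfr : finrank K (annlK K ((annrK K (J : Set A) : Submodule K A) : Set A))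
      = finrank K (lIdealK K J) := by omega
  exact (Submodule.eq_of_le_of_finrank_le hle (le_of_eq hfr)).symm

end Aux

/-- In a finite-dimensional Frobenius algebra, a right ideal `I` is checkable
iff its left annihilator is a principal left ideal. -/
theorem stmt3 (K : Type*) [Field K] (A : Type*) [Ring A] [Algebra K A]
    [FiniteDimensional K A] (hA : IsFrobeniusAlgebra K A)
    (I : Submodule Aᵐᵒᵖ A) :
    (∃ v : A, (I : Set A) = {a : A | v * a = 0}) ↔
      (∃ v : A, {a : A | ∀ c ∈ I, a * c = 0} = {x : A | ∃ b : A, x = b * v}) := by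
  obtain ⟨lam, hL, hR⟩ := hA
  constructor
  · rintro ⟨v, hv⟩
    refine ⟨v, ?_⟩
    -- left ideal L = span A {v}; I = ann_r L, so ann_l I = L
    set L : Submodule A A := Submodule.span A {v} with hLdef
    have hLset : (L : Set A) = {x : A | ∃ b : A, x = b * v} := by
      ext x
      simp only [SetLike.mem_coe, hLdef, Submodule.mem_span_singleton, Set.mem_setOf_eq]
      constructor
      · rintro ⟨b, rfl⟩; exact ⟨b, rfl⟩
      · rintro ⟨b, rfl⟩; exact ⟨b, rfl⟩
    have hIann : (I : Set A) = (annrK K (L : Set A) : Set A) := by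
      rw [hv]
      ext a
      simp only [Set.mem_setOf_eq, SetLike.mem_coe, mem_annrK, hLset]
      constructor
      · rintro h x ⟨b, rfl⟩
        rw [mul_assoc, h, mul_zero]
      · intro h
        simpa using h v ⟨1, (one_mul v).symm⟩
    have key := double_ann_left K hL hR L
    have : {a : A | ∀ c ∈ I, a * c = 0}
        = (annlK K ((annrK K (L : Set A) : Submodule K A) : Set A) : Set A) := by
      ext a
      simp only [Set.mem_setOf_eq, SetLike.mem_coe, mem_annlK]
      constructor
      · intro h x hx
        have : x ∈ (I : Set A) := by rw [hIann]; exact hx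
        exact h x this
      · intro h c hc
        have : c ∈ (annrK K (L : Set A) : Set A) := by rw [← hIann]; exact hc
        exact h c this
    rw [this, key, ← hLset]
    rfl
  · rintro ⟨v, hv⟩
    refine ⟨v, ?_⟩
    -- ann_l I = Av as sets; I = ann_r (ann_l I) = ann_r(Av) = {a | v*a = 0}
    have key := double_ann_right K hL hR I
    have hI : (I : Set A)
        = (annrK K ((annlK K (I : Set A) : Submodule K A) : Set A) : Set A) := by
      rw [key]; rfl
    rw [hI]
    ext a
    simp only [SetLike.mem_coe, mem_annrK, Set.mem_setOf_eq]
    constructor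
    · intro h
      apply h v
      have : v ∈ {x : A | ∃ b : A, x = b * v} := ⟨1, (one_mul v).symm⟩
      rw [← hv] at this
      exact this
    · intro h x hx
      have hx' : x ∈ {x : A | ∃ b : A, x = b * v} := by
        rw [← hv]
        exact hx
      obtain ⟨b, rfl⟩ := hx'
      rw [mul_assoc, h, mul_zero]
end

section
/- Let G be a finite group, K a finite field, and C a right ideal of the group algebra KG. Then C^⊥ = (ann_l(C))^, where C^⊥ is the orthogonal complement with respect to the bilinear form ⟨g,h⟩ = δ_{g,h}, ann_l(C) = {a ∈ KG : aC = 0}, and ^ is the K-linear map sending g to g⁻¹. -/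
/-- The `K`-linear map on the group algebra `KG` sending each group element `g` to `g⁻¹`. -/
noncomputable def groupAlgebraHat (K : Type*) [Field K] (G : Type*) [Group G] :
    MonoidAlgebra K G →ₗ[K] MonoidAlgebra K G :=
  MonoidAlgebra.mapDomainLinearMap K K (·⁻¹)

lemma groupAlgebraHat_apply (K : Type*) [Field K] (G : Type*) [Group G]
    (a : MonoidAlgebra K G) (x : G) : (groupAlgebraHat K G a).coeff x = a.coeff x⁻¹ := by
  simpa [groupAlgebraHat, MonoidAlgebra.coeff_mapDomainLinearMap] using
    Finsupp.mapDomain_apply (f := fun g : G => g⁻¹) (fun _ _ h => inv_injective h) a.coeff x⁻¹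

lemma groupAlgebraHat_invol (K : Type*) [Field K] (G : Type*) [Group G]
    (a : MonoidAlgebra K G) : groupAlgebraHat K G (groupAlgebraHat K G a) = a := by
  ext x; simp [groupAlgebraHat_apply]

lemma hat_mul_apply (K : Type*) [Field K] (G : Type*) [Group G] [Fintype G]
    (a c : MonoidAlgebra K G) (x : G) :
    (groupAlgebraHat K G a * c).coeff x = ∑ g : G, a.coeff (g * x⁻¹) * c.coeff g := by
  rw [MonoidAlgebra.coeff_mul_apply_right,
    Finsupp.sum_fintype _ _ (fun g => by simp)]
  refine Finset.sum_congr rfl fun g _ => ?_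
  rw [groupAlgebraHat_apply]
  simp [mul_inv_rev]

/-- MacWilliams: for a right ideal `C` of `KG`, the orthogonal complement of
`C` with respect to the bilinear form `⟨g,h⟩ = δ_{g,h}` equals the image of the left
annihilator of `C` under the map `g ↦ g⁻¹`. -/
theorem stmt5 (K : Type*) [Field K] [Fintype K] (G : Type*) [Group G] [Fintype G]
    (C : Submodule (MonoidAlgebra K G)ᵐᵒᵖ (MonoidAlgebra K G)) :
    {a : MonoidAlgebra K G | ∀ c ∈ C, ∑ g : G, a.coeff g * c.coeff g = 0} =
      groupAlgebraHat K G '' {a : MonoidAlgebra K G | ∀ c ∈ C, a * c = 0} := by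
  ext a
  constructor
  · intro ha
    refine ⟨groupAlgebraHat K G a, fun c hc => ?_, groupAlgebraHat_invol K G a⟩
    ext x
    rw [hat_mul_apply]
    have hd : c * MonoidAlgebra.single x⁻¹ (1 : K) ∈ C := by
      simpa [MulOpposite.smul_eq_mul_unop] using
        C.smul_mem (MulOpposite.op (MonoidAlgebra.single x⁻¹ (1 : K))) hc
    have := ha _ hd
    simp only [MonoidAlgebra.coeff_mul_single_apply, inv_inv, mul_one] at this
    rw [show (0 : MonoidAlgebra K G).coeff x = 0 from rfl, ← this]
    exact Fintype.sum_equiv (Equiv.mulRight x⁻¹) _ _ (fun h => by simp)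
  · rintro ⟨b, hb, rfl⟩ c hc
    have h0 := hb c hc
    have : (b * c).coeff 1 = 0 := by rw [h0]; rfl
    rw [MonoidAlgebra.coeff_mul_apply_right, Finsupp.sum_fintype _ _ (fun g => by simp)] at this
    rw [← this]
    refine Finset.sum_congr rfl fun g _ => ?_
    rw [groupAlgebraHat_apply]
    simp
end

section
/- Let G be a finite group, K a finite field, and C a right ideal of KG. Then C is checkable (i.e., C = {a ∈ KG : va = 0} for some v ∈ KG) if and only if the orthogonal complement C^⊥ (with respect to the standard bilinear form ⟨g,h⟩ = δ_{g,h}) is a principal right ideal of KG. -/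
set_option linter.unusedSectionVars false
open MonoidAlgebra Module MulOpposite

namespace Stmt6Aux
variable {K : Type*} [Field K] {G : Type*} [Group G] [Fintype G]

@[simp] lemma add_apply' (a b : MonoidAlgebra K G) (g : G) :
    (a + b).coeff g = a.coeff g + b.coeff g :=
  Finsupp.add_apply a.coeff b.coeff g

@[simp] lemma smul_apply' (k : K) (a : MonoidAlgebra K G) (g : G) : (k • a).coeff g = k * a.coeff g :=
  Finsupp.smul_apply k a.coeff g

@[simp] lemma zero_apply' (g : G) : (0 : MonoidAlgebra K G).coeff g = 0 := rfl

lemma ext' {a b : MonoidAlgebra K G} (h : ∀ g, a.coeff g = b.coeff g) : a = b :=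
  MonoidAlgebra.ext (Finsupp.ext h)

noncomputable def hat : MonoidAlgebra K G ≃ₗ[K] MonoidAlgebra K G :=
  MonoidAlgebra.mapDomainLinearEquiv K K (Equiv.inv G)

@[simp] lemma hat_apply (a : MonoidAlgebra K G) (g : G) : (hat a).coeff g = a.coeff g⁻¹ := rfl

@[simp] lemma hat_hat (a : MonoidAlgebra K G) : hat (hat a) = a := ext' fun g => by simp

lemma mul_apply_sum (f g : MonoidAlgebra K G) (x : G) :
    (f * g).coeff x = ∑ h : G, f.coeff h * g.coeff (h⁻¹ * x) := by
  rw [MonoidAlgebra.coeff_mul_apply_left, Finsupp.sum_fintype _ _ (fun a => by simp)]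

lemma hat_mul (x y : MonoidAlgebra K G) : hat (x * y) = hat y * hat x := by
  apply ext'
  intro g
  rw [hat_apply, mul_apply_sum, mul_apply_sum]
  refine Fintype.sum_equiv (Equiv.mulLeft g) _ _ (fun h => ?_)
  simp only [hat_apply, Equiv.coe_mulLeft, mul_inv_rev, inv_inv, inv_mul_cancel_left]
  exact mul_comm _ _

noncomputable def B : LinearMap.BilinForm K (MonoidAlgebra K G) :=
  LinearMap.mk₂ K (fun a c => ∑ g : G, a.coeff g * c.coeff g)
    (fun a b c => by simp [add_mul, Finset.sum_add_distrib])
    (fun k a c => by simp [Finset.mul_sum, mul_assoc])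
    (fun a b c => by simp [mul_add, Finset.sum_add_distrib])
    (fun k a c => by simp [Finset.mul_sum]; exact Finset.sum_congr rfl fun g _ => by ring)

@[simp] lemma B_apply (a c : MonoidAlgebra K G) : B a c = ∑ g : G, a.coeff g * c.coeff g := rfl

lemma B_symm : (B (K := K) (G := G)).IsSymm := ⟨fun a c => by
  simp [Finset.sum_congr rfl fun g _ => mul_comm (a.coeff g) (c.coeff g), mul_comm]⟩

lemma B_refl : (B (K := K) (G := G)).IsRefl := B_symm.isRefl

lemma B_nondeg : (B (K := K) (G := G)).Nondegenerate := by
  classical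
  have hl : ∀ a : MonoidAlgebra K G, (∀ c, B a c = 0) → a = 0 := by
    intro a ha
    apply ext'
    intro g
    have := ha (MonoidAlgebra.single g 1)
    simp only [B_apply, MonoidAlgebra.coeff_single, Finsupp.single_apply] at this
    simpa [Finset.sum_ite_eq'] using this
  exact ⟨hl, fun a ha => hl a fun c => (B_symm.eq a c).trans (ha c)⟩

lemma B_eq_mul_one (a c : MonoidAlgebra K G) : B a c = (hat a * c).coeff 1 := by
  rw [B_apply, mul_apply_sum]
  refine Fintype.sum_equiv (Equiv.inv G) _ _ (fun g => ?_)
  simp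

end Stmt6Aux

namespace Stmt6Aux
variable {K : Type*} [Field K] {G : Type*} [Group G] [Fintype G]

instance : Module.Finite K (MonoidAlgebra K G) :=
  Module.Finite.equiv ((MonoidAlgebra.coeffLinearEquiv K).trans
    (Finsupp.linearEquivFunOnFinite K K G)).symm

lemma B_comm (a c : MonoidAlgebra K G) : B a c = B c a := by
  simp only [B_apply]
  exact Finset.sum_congr rfl fun g _ => mul_comm _ _

lemma eq_zero_of_forall (y : MonoidAlgebra K G)
    (h : ∀ g : G, ((y * MonoidAlgebra.single g 1 : MonoidAlgebra K G)).coeff (1 : G) = 0) : y = 0 := by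
  apply ext'
  intro g
  have := h g⁻¹
  rwa [MonoidAlgebra.coeff_mul_single_apply, inv_inv, one_mul, mul_one] at this

lemma orth_principal (v a : MonoidAlgebra K G) :
    (∀ b, B a (v * b) = 0) ↔ hat a * v = 0 := by
  constructor
  · intro h
    apply eq_zero_of_forall
    intro g
    have := h (MonoidAlgebra.single g 1)
    rwa [B_eq_mul_one, ← mul_assoc] at this
  · intro h b
    rw [B_eq_mul_one, ← mul_assoc, h, zero_mul]
    exact zero_apply' 1

lemma orth_range_mulLeft (v : MonoidAlgebra K G) :
    B.orthogonal (LinearMap.range (LinearMap.mulLeft K v)) =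
      LinearMap.ker ((LinearMap.mulRight K v) ∘ₗ hat.toLinearMap) := by
  ext a
  rw [LinearMap.BilinForm.mem_orthogonal_iff, LinearMap.mem_ker]
  simp only [LinearMap.coe_comp, Function.comp_apply, LinearEquiv.coe_coe,
    LinearMap.mulRight_apply]
  rw [← orth_principal]
  constructor
  · intro h b
    rw [B_comm]
    exact h (v * b) ⟨b, rfl⟩
  · rintro h x ⟨b, rfl⟩
    show B (v * b) a = 0
    rw [B_comm]
    exact h b

lemma finrank_ker_comp_hat (f : MonoidAlgebra K G →ₗ[K] MonoidAlgebra K G) :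
    Module.finrank K (LinearMap.ker (f ∘ₗ (hat (K := K) (G := G)).toLinearMap)) =
      Module.finrank K (LinearMap.ker f) := by
  rw [LinearMap.ker_comp, Submodule.comap_equiv_eq_map_symm hat]
  exact LinearEquiv.finrank_map_eq _ _

lemma finrank_left_right (v : MonoidAlgebra K G) :
    Module.finrank K (LinearMap.range (LinearMap.mulLeft K v)) =
      Module.finrank K (LinearMap.range (LinearMap.mulRight K v)) := by
  have h1 := LinearMap.BilinForm.finrank_orthogonal (B_nondeg)
      (LinearMap.range (LinearMap.mulLeft K v))
  rw [orth_range_mulLeft, finrank_ker_comp_hat] at h1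
  have h3 := LinearMap.finrank_range_add_finrank_ker (LinearMap.mulRight K v)
  have h5 : Module.finrank K (LinearMap.range (LinearMap.mulLeft K v)) ≤
      Module.finrank K (MonoidAlgebra K G) := Submodule.finrank_le _
  omega

lemma range_mulLeft_hat (v : MonoidAlgebra K G) :
    LinearMap.range (LinearMap.mulLeft K (hat v)) =
      Submodule.map hat.toLinearMap (LinearMap.range (LinearMap.mulRight K v)) := by
  ext x
  simp only [LinearMap.mem_range, Submodule.mem_map, LinearMap.mulLeft_apply,
    LinearMap.mulRight_apply, LinearEquiv.coe_coe]
  constructor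
  · rintro ⟨b, rfl⟩
    exact ⟨hat b * v, ⟨hat b, rfl⟩, by rw [hat_mul, hat_hat]⟩
  · rintro ⟨y, ⟨b, rfl⟩, rfl⟩
    exact ⟨hat b, by rw [hat_mul]⟩

lemma finrank_range_mulLeft_hat (v : MonoidAlgebra K G) :
    Module.finrank K (LinearMap.range (LinearMap.mulLeft K (hat v))) =
      Module.finrank K (LinearMap.range (LinearMap.mulLeft K v)) := by
  rw [range_mulLeft_hat, LinearEquiv.finrank_map_eq, finrank_left_right]

end Stmt6Aux

open Stmt6Aux

/-- a right ideal `C` of the group algebra `KG` of a finite group `G` over a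
finite field `K` is checkable iff its orthogonal complement (w.r.t. the bilinear form with
the group elements as an orthonormal basis) is a principal right ideal `u·KG`. -/
theorem stmt6 (K : Type*) [Field K] [Fintype K] (G : Type*) [Group G] [Fintype G]
    (C : Submodule (MonoidAlgebra K G)ᵐᵒᵖ (MonoidAlgebra K G)) :
    (∃ v : MonoidAlgebra K G, (C : Set (MonoidAlgebra K G)) =
        {a : MonoidAlgebra K G | v * a = 0}) ↔
      (∃ u : MonoidAlgebra K G,
        {a : MonoidAlgebra K G | ∀ c ∈ C, ∑ g : G, a.coeff g * c.coeff g = 0} =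
          {x : MonoidAlgebra K G | ∃ b : MonoidAlgebra K G, x = u * b}) := by
  classical
  set CK : Submodule K (MonoidAlgebra K G) := C.restrictScalars K with hCKdef
  have memCK : ∀ a : MonoidAlgebra K G, a ∈ CK ↔ a ∈ C := fun a => Iff.rfl
  have orth_char : ∀ a : MonoidAlgebra K G,
      a ∈ Stmt6Aux.B.orthogonal CK ↔ ∀ c ∈ C, ∑ g : G, a.coeff g * c.coeff g = 0 := by
    intro a
    rw [LinearMap.BilinForm.mem_orthogonal_iff]
    constructor
    · intro h c hc
      have h2 : Stmt6Aux.B c a = 0 := h c ((memCK c).2 hc)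
      rw [B_comm] at h2
      exact h2
    · intro h n hn
      show Stmt6Aux.B n a = 0
      rw [B_comm]
      exact h n ((memCK n).1 hn)
  constructor
  · rintro ⟨v, hv⟩
    refine ⟨hat v, ?_⟩
    have hvC : ∀ a : MonoidAlgebra K G, a ∈ C ↔ v * a = 0 := fun a => by
      rw [← SetLike.mem_coe, hv]; exact Iff.rfl
    have hCK : CK = LinearMap.ker (LinearMap.mulLeft K v) := by
      ext a
      rw [memCK, hvC, LinearMap.mem_ker, LinearMap.mulLeft_apply]
    have hle : LinearMap.range (LinearMap.mulLeft K (hat v)) ≤ Stmt6Aux.B.orthogonal CK := by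
      rintro x ⟨b, rfl⟩
      rw [LinearMap.BilinForm.mem_orthogonal_iff]
      intro c hc
      show Stmt6Aux.B c _ = 0
      rw [B_comm, B_eq_mul_one]
      have hx : hat ((LinearMap.mulLeft K (hat v)) b) = hat b * v := by
        rw [LinearMap.mulLeft_apply, hat_mul, hat_hat]
      rw [hx, mul_assoc, (hvC c).1 ((memCK c).1 hc), mul_zero]
      exact zero_apply' 1
    have heq : LinearMap.range (LinearMap.mulLeft K (hat v)) = Stmt6Aux.B.orthogonal CK := by
      apply Submodule.eq_of_le_of_finrank_le hle
      rw [LinearMap.BilinForm.finrank_orthogonal B_nondeg,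
        finrank_range_mulLeft_hat, hCK]
      have h3 := LinearMap.finrank_range_add_finrank_ker (LinearMap.mulLeft K v)
      omega
    ext x
    rw [Set.mem_setOf_eq, Set.mem_setOf_eq, ← orth_char, ← heq]
    simp only [LinearMap.mem_range, LinearMap.mulLeft_apply]
    exact ⟨fun ⟨b, hb⟩ => ⟨b, hb.symm⟩, fun ⟨b, hb⟩ => ⟨b, hb.symm⟩⟩
  · rintro ⟨u, hu⟩
    refine ⟨hat u, ?_⟩
    have horth : Stmt6Aux.B.orthogonal CK = LinearMap.range (LinearMap.mulLeft K u) := by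
      ext x
      rw [orth_char]
      have h1 : (∀ c ∈ C, ∑ g : G, x.coeff g * c.coeff g = 0) ↔
          x ∈ {x : MonoidAlgebra K G | ∃ b, x = u * b} := by
        rw [← hu]; exact Iff.rfl
      rw [h1]
      simp only [Set.mem_setOf_eq, LinearMap.mem_range, LinearMap.mulLeft_apply]
      exact ⟨fun ⟨b, hb⟩ => ⟨b, hb.symm⟩, fun ⟨b, hb⟩ => ⟨b, hb.symm⟩⟩
    have hoo := LinearMap.BilinForm.orthogonal_orthogonal B_nondeg B_refl CK
    rw [horth, orth_range_mulLeft] at hoo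
    have key : ∀ a : MonoidAlgebra K G, hat a * u = 0 ↔ hat u * a = 0 := by
      intro a
      constructor
      · intro h
        have h2 := congrArg (fun z => hat z) h
        rwa [hat_mul, hat_hat, map_zero] at h2
      · intro h
        have h2 := congrArg (fun z => hat z) h
        rwa [hat_mul, hat_hat, map_zero] at h2
    ext a
    rw [SetLike.mem_coe, Set.mem_setOf_eq, ← memCK, ← hoo, LinearMap.mem_ker]
    simp only [LinearMap.coe_comp, Function.comp_apply, LinearEquiv.coe_coe,
      LinearMap.mulRight_apply]
    exact key a
end

section
/- Let G be a finite group and K a finite field. Every maximal right ideal of the group algebra KG is checkable, i.e., if C is a maximal right ideal of KG then there exists v ∈ KG with C = {a ∈ KG : va = 0}. -/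
open MonoidAlgebra Finsupp

section aux

variable {K : Type*} [Field K] {G : Type*} [Group G] [Fintype G]

/-- The "check element" associated to a linear functional `φ` on `KG`. -/
noncomputable def checkVec (φ : MonoidAlgebra K G →ₗ[K] K) : MonoidAlgebra K G :=
  ∑ x : G, MonoidAlgebra.single x (φ (MonoidAlgebra.single x⁻¹ 1))

lemma sum_single_eq_mul_single (a : MonoidAlgebra K G) (g : G) :
    ∑ x : G, (MonoidAlgebra.single x⁻¹ (a.coeff (x⁻¹ * g)) : MonoidAlgebra K G) =
      a * MonoidAlgebra.single g⁻¹ 1 := by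
  rw [Fintype.sum_equiv (Equiv.inv G) _ (fun y => (MonoidAlgebra.single y (a.coeff (y * g)) : MonoidAlgebra K G))
    (fun x => by simp)]
  ext z
  rw [MonoidAlgebra.coeff_mul_single_apply, MonoidAlgebra.coeff_sum, Finsupp.finset_sum_apply]
  classical
  simp only [MonoidAlgebra.coeff_single, Finsupp.single_apply]
  rw [Finset.sum_ite_eq']
  simp

lemma checkVec_mul_apply (φ : MonoidAlgebra K G →ₗ[K] K) (a : MonoidAlgebra K G) (g : G) :
    (checkVec φ * a).coeff g = φ (a * MonoidAlgebra.single g⁻¹ 1) := by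
  rw [checkVec, Finset.sum_mul, ← sum_single_eq_mul_single a g, map_sum,
    MonoidAlgebra.coeff_sum, Finsupp.finset_sum_apply]
  refine Finset.sum_congr rfl fun x _ => ?_
  rw [MonoidAlgebra.coeff_single_mul_apply]
  have : (MonoidAlgebra.single x⁻¹ (a.coeff (x⁻¹ * g)) : MonoidAlgebra K G) =
      a.coeff (x⁻¹ * g) • (MonoidAlgebra.single x⁻¹ (1 : K) : MonoidAlgebra K G) := by
    simp [Finsupp.smul_single]
  rw [this, map_smul, smul_eq_mul, mul_comm]

end aux

/-- every maximal right ideal of the group algebra `KG` of a finite group `G`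
over a finite field `K` is checkable. -/
theorem stmt8 (K : Type*) [Field K] [Fintype K] (G : Type*) [Group G] [Fintype G]
    (C : Submodule (MonoidAlgebra K G)ᵐᵒᵖ (MonoidAlgebra K G)) (hC : IsCoatom C) :
    ∃ v : MonoidAlgebra K G,
      (C : Set (MonoidAlgebra K G)) = {a : MonoidAlgebra K G | v * a = 0} := by
  classical
  -- view C as a K-submodule
  have smul_mem' : ∀ (c : K) {a : MonoidAlgebra K G}, a ∈ C → c • a ∈ C := by
    intro c a ha
    have : c • a = MulOpposite.op (MonoidAlgebra.single (1 : G) c) • a := by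
      rw [op_smul_eq_mul]
      ext z
      rw [MonoidAlgebra.coeff_mul_single_apply]
      rw [MonoidAlgebra.coeff_smul_apply, smul_eq_mul, mul_comm, inv_one, mul_one]
    rw [this]
    exact C.smul_mem _ ha
  set C' : Submodule K (MonoidAlgebra K G) :=
    { carrier := C
      add_mem' := fun h h' => C.add_mem h h'
      zero_mem' := C.zero_mem
      smul_mem' := fun c a ha => smul_mem' c ha } with hC'
  -- pick x ∉ C
  obtain ⟨x, hx⟩ : ∃ x : MonoidAlgebra K G, x ∉ C := by
    by_contra h
    push_neg at h
    exact hC.1 (by ext y; simp [h y])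
  -- get a functional vanishing on C with φ x ≠ 0
  obtain ⟨φ, hφx, hφ⟩ := C'.exists_dual_map_eq_bot_of_notMem (x := x) hx inferInstance
  have hker : ∀ a ∈ C, φ a = 0 := by
    intro a ha
    have : φ a ∈ C'.map φ := Submodule.mem_map_of_mem (by exact ha)
    rwa [hφ, Submodule.mem_bot] at this
  set v := checkVec φ with hv
  -- key: for a ∈ C, v * a = 0
  have hva : ∀ a ∈ C, v * a = 0 := by
    intro a ha
    ext g
    rw [checkVec_mul_apply]
    have : a * MonoidAlgebra.single g⁻¹ 1 =
        MulOpposite.op (MonoidAlgebra.single (g⁻¹ : G) (1 : K)) • a := rfl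
    rw [this]
    exact hker _ (C.smul_mem _ ha)
  -- v ≠ 0
  have hvne : v ≠ 0 := by
    intro h
    apply hφx
    have h2 := checkVec_mul_apply φ x 1
    rw [← hv, h, zero_mul] at h2
    rw [inv_one, ← MonoidAlgebra.one_def, mul_one] at h2
    exact h2.symm ▸ (Finsupp.zero_apply)
  -- the annihilator submodule
  set A : Submodule (MonoidAlgebra K G)ᵐᵒᵖ (MonoidAlgebra K G) :=
    { carrier := {a | v * a = 0}
      add_mem' := by intro a b ha hb; simp only [Set.mem_setOf_eq] at *; rw [mul_add, ha, hb, add_zero]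
      zero_mem' := by simp
      smul_mem' := by
        intro c a ha
        simp only [Set.mem_setOf_eq, MulOpposite.smul_eq_mul_unop] at *
        rw [← mul_assoc, ha, zero_mul] } with hA
  have hCA : C ≤ A := fun a ha => hva a ha
  have hAne : A ≠ ⊤ := by
    intro h
    apply hvne
    have h1 : (1 : MonoidAlgebra K G) ∈ A := h ▸ Submodule.mem_top
    have h2 : v * 1 = 0 := h1
    rwa [mul_one] at h2
  have : C = A := by
    rcases eq_or_lt_of_le hCA with h | h
    · exact h
    · exact absurd (hC.2 _ h) hAne
  exact ⟨v, by rw [this]; rfl⟩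
end

section
/- Let p be a prime, K a finite field of characteristic p, and G a non-cyclic finite p-group. Then the Jacobson radical J(KG) of the group algebra KG is not a principal right ideal. -/
open MonoidAlgebra Multiplicative

/-- The augmentation map of a group algebra. -/
noncomputable def stmt9eps (K : Type*) [Field K] (G : Type*) [Group G] :
    MonoidAlgebra K G →ₐ[K] K := MonoidAlgebra.lift K K G 1

lemma stmt9eps_single {K : Type*} [Field K] {G : Type*} [Group G] (g : G) (b : K) :
    stmt9eps K G (single g b) = b := by
  rw [stmt9eps, MonoidAlgebra.lift_single]; simp

noncomputable def stmt9L {K : Type*} [Field K] {G : Type*} [Group G] (d : G → K) :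
    MonoidAlgebra K G →ₗ[K] K :=
  Finsupp.linearCombination K d ∘ₗ (MonoidAlgebra.coeffLinearEquiv K (S := K) (M := G)).toLinearMap

lemma stmt9L_single {K : Type*} [Field K] {G : Type*} [Group G] (d : G → K) (g : G) (b : K) :
    stmt9L d (single g b) = b • d g := by
  simp [stmt9L, MonoidAlgebra.coeffLinearEquiv, MonoidAlgebra.coeff_single]

lemma stmt9_ker_isMaximal {K : Type*} [Field K] {G : Type*} [Group G] : (RingHom.ker (stmt9eps K G : MonoidAlgebra K G →ₐ[K] K)).IsMaximal := by
  rw [Ideal.isMaximal_iff]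
  constructor
  · intro h
    rw [RingHom.mem_ker, map_one] at h
    exact one_ne_zero h
  · intro J x hIJ hxI hxJ
    have hx : stmt9eps K G x ≠ 0 := fun h => hxI (by rwa [RingHom.mem_ker])
    have h1 : x - algebraMap K (MonoidAlgebra K G) (stmt9eps K G x) ∈ J := by
      apply hIJ
      rw [RingHom.mem_ker, map_sub,
        show (algebraMap K (MonoidAlgebra K G)) (stmt9eps K G x) = single 1 (stmt9eps K G x)
          from rfl, stmt9eps_single, sub_self]
    have h2 : algebraMap K (MonoidAlgebra K G) (stmt9eps K G x) ∈ J := by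
      have := J.sub_mem hxJ h1
      simpa using this
    have h3 : algebraMap K (MonoidAlgebra K G) (stmt9eps K G x)⁻¹ *
        algebraMap K (MonoidAlgebra K G) (stmt9eps K G x) ∈ J := J.mul_mem_left _ h2
    rwa [← map_mul, inv_mul_cancel₀ hx, map_one] at h3


private lemma zmodCast_surj (p n : ℕ) [NeZero n] [NeZero p] (h : p ∣ n) :
    Function.Surjective (ZMod.castHom h (ZMod p)) := by
  intro y
  refine ⟨((y.val : ℕ) : ZMod n), ?_⟩
  rw [map_natCast, ZMod.natCast_val, ZMod.cast_id]

private lemma stmt9_abelian_case (p : ℕ) [Fact p.Prime] (A : Type*) [CommGroup A] [Finite A]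
    (hA : IsPGroup p A) (hnc : ¬ IsCyclic A) :
    ∃ f : A →* Multiplicative (ZMod p) × Multiplicative (ZMod p), Function.Surjective f := by
  classical
  haveI : NeZero p := ⟨(Fact.out : p.Prime).ne_zero⟩
  obtain ⟨ι, _, n, h1, ⟨e⟩⟩ := CommGroup.equiv_prod_multiplicative_zmod_of_finite A
  by_cases hι : Subsingleton ι
  · exfalso
    apply hnc
    rcases isEmpty_or_nonempty ι with h | h
    · haveI : Subsingleton ((i : ι) → Multiplicative (ZMod (n i))) :=
        ⟨fun a b => funext fun i => (h.false i).elim⟩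
      haveI : IsCyclic ((i : ι) → Multiplicative (ZMod (n i))) := isCyclic_of_subsingleton
      exact isCyclic_of_surjective e.symm e.symm.surjective
    · haveI : Unique ι := ⟨⟨h.some⟩, fun a => Subsingleton.elim a h.some⟩
      haveI : IsCyclic ((i : ι) → Multiplicative (ZMod (n i))) :=
        isCyclic_of_surjective (MulEquiv.piUnique _).symm (MulEquiv.piUnique _).symm.surjective
      exact isCyclic_of_surjective e.symm e.symm.surjective
  · obtain ⟨i, j, hij⟩ := (not_subsingleton_iff_nontrivial.mp hι).exists_pair_ne
    haveI : ∀ i : ι, NeZero (n i) := fun i => ⟨by have := h1 i; omega⟩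
    have hdvd : ∀ i : ι, p ∣ n i := by
      intro i
      have horder : orderOf (e.symm (Pi.mulSingle i (ofAdd (1 : ZMod (n i))))) = n i := by
        rw [MulEquiv.orderOf_eq, orderOf_piMulSingle, orderOf_ofAdd_eq_addOrderOf,
          ZMod.addOrderOf_one (n i)]
      obtain ⟨k, hk⟩ := hA (e.symm (Pi.mulSingle i (ofAdd (1 : ZMod (n i)))))
      have hd : n i ∣ p ^ k := horder ▸ orderOf_dvd_of_pow_eq_one hk
      obtain ⟨m, hm, hni⟩ := (Nat.dvd_prime_pow (Fact.out : p.Prime)).mp hd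
      have hm1 : m ≠ 0 := by
        rintro rfl
        have h1i := h1 i
        rw [hni] at h1i
        simpa using h1i
      rw [hni]; exact dvd_pow_self p hm1
    let c : ∀ i : ι, Multiplicative (ZMod (n i)) →* Multiplicative (ZMod p) := fun i =>
      AddMonoidHom.toMultiplicative (ZMod.castHom (hdvd i) (ZMod p)).toAddMonoidHom
    let F : ((i : ι) → Multiplicative (ZMod (n i))) →* Multiplicative (ZMod p) × Multiplicative (ZMod p) :=
      ((c i).comp (Pi.evalMonoidHom _ i)).prod ((c j).comp (Pi.evalMonoidHom _ j))
    refine ⟨F.comp e.toMonoidHom, ?_⟩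
    have hFsurj : Function.Surjective F := by
      rintro ⟨u, v⟩
      obtain ⟨a, ha⟩ := zmodCast_surj p (n i) (hdvd i) u.toAdd
      obtain ⟨b, hb⟩ := zmodCast_surj p (n j) (hdvd j) v.toAdd
      let x : (i' : ι) → Multiplicative (ZMod (n i')) :=
        Pi.mulSingle i (ofAdd a) * Pi.mulSingle j (ofAdd b)
      refine ⟨x, ?_⟩
      have hx1 : x i = ofAdd a := by
        simp [x, Pi.mulSingle_apply, hij.symm]
      have hx2 : x j = ofAdd b := by
        simp [x, Pi.mulSingle_apply, hij]
      simp only [F, MonoidHom.prod_apply, MonoidHom.comp_apply, Pi.evalMonoidHom_apply, hx1, hx2]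
      ext
      · simpa [c] using ha
      · simpa [c] using hb
    exact hFsurj.comp e.surjective

private lemma stmt9_surj_aux (p : ℕ) [Fact p.Prime] : ∀ (n : ℕ) (G : Type u) [Group G] [Finite G],
    Nat.card G ≤ n → IsPGroup p G → ¬ IsCyclic G →
    ∃ f : G →* Multiplicative (ZMod p) × Multiplicative (ZMod p), Function.Surjective f := by
  intro n
  induction n with
  | zero =>
    intro G _ _ hcard _ _
    exact absurd hcard (by have := Nat.card_pos (α := G); omega)
  | succ n ih =>
    intro G _ _ hcard hG hnc
    haveI : Nontrivial G := by
      rcases subsingleton_or_nontrivial G with h | h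
      · exact absurd isCyclic_of_subsingleton hnc
      · exact h
    haveI := IsPGroup.center_nontrivial hG
    have hpz : p ∣ Nat.card (Subgroup.center G) := by
      obtain ⟨k, hk⟩ := (hG.to_subgroup (Subgroup.center G)).exists_card_eq
      have hk0 : k ≠ 0 := by
        rintro rfl
        rw [pow_zero] at hk
        exact (Finite.one_lt_card (α := Subgroup.center G)).ne' hk
      rw [hk]
      exact dvd_pow_self p hk0
    obtain ⟨z, hz⟩ := exists_prime_orderOf_dvd_card' p hpz
    set N : Subgroup G := Subgroup.zpowers (z : G) with hN
    have hNle : N ≤ Subgroup.center G := by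
      rw [hN, Subgroup.zpowers_le]
      exact z.2
    haveI : N.Normal := by
      constructor
      intro x hx g
      have hc : Commute g x := Subgroup.mem_center_iff.mp (hNle hx) g
      rw [hc.eq, mul_assoc, mul_inv_cancel, mul_one]
      exact hx
    have hcardN : Nat.card N = p := by
      have hoz : orderOf ((z : G)) = p := by
        rw [← hz]
        exact orderOf_injective (Subgroup.center G).subtype (Subgroup.subtype_injective _) z
      rw [hN, Nat.card_zpowers, hoz]
    have hcardQ : Nat.card (G ⧸ N) ≤ n := by
      have h1 := Subgroup.card_eq_card_quotient_mul_card_subgroup N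
      have hp2 : 2 ≤ p := (Fact.out : p.Prime).two_le
      have hq1 : 1 ≤ Nat.card (G ⧸ N) := Nat.card_pos
      rw [hcardN] at h1
      nlinarith [hcard, h1]
    by_cases hQ : IsCyclic (G ⧸ N)
    · -- G is abelian
      letI : CommGroup G := commGroupOfCyclicCenterQuotient (QuotientGroup.mk' N)
        (by rw [QuotientGroup.ker_mk']; exact hNle)
      exact stmt9_abelian_case p G hG hnc
    · obtain ⟨f', hf'⟩ := ih (G ⧸ N) hcardQ (hG.to_quotient N) hQ
      exact ⟨f'.comp (QuotientGroup.mk' N), hf'.comp (QuotientGroup.mk'_surjective N)⟩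

set_option synthInstance.maxHeartbeats 1000000 in
set_option maxHeartbeats 1000000 in
lemma stmt9_jacobson (p : ℕ) [Fact p.Prime] (K : Type*) [Field K] [Fintype K] [CharP K p]
    (G : Type*) [Group G] [Fintype G] (hG : IsPGroup p G) :
    (⊥ : Ideal (MonoidAlgebra K G)).jacobson
      = RingHom.ker (stmt9eps K G : MonoidAlgebra K G →ₐ[K] K) := by
  classical
  haveI : Finite (MonoidAlgebra K G) :=
    Finite.of_equiv (G → K) ((Finsupp.equivFunOnFinite (α := G) (M := K)).symm.trans MonoidAlgebra.coeffEquiv.symm)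
  apply le_antisymm
  · exact sInf_le ⟨bot_le, stmt9_ker_isMaximal⟩
  · rw [Ideal.jacobson]
    apply le_sInf
    rintro M ⟨-, hM⟩
    -- the quotient module
    haveI : IsSimpleModule (MonoidAlgebra K G) (MonoidAlgebra K G ⧸ M) :=
      isSimpleModule_iff_isCoatom.mpr hM.out
    haveI : Nontrivial (MonoidAlgebra K G ⧸ M) :=
      (Submodule.Quotient.nontrivial_iff).mpr hM.out.1
    haveI : Finite (MonoidAlgebra K G ⧸ M) := Quotient.finite _
    -- G-action on the quotient
    letI act : MulAction G (MonoidAlgebra K G ⧸ M) :=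
      { smul := fun g v => (single g (1 : K) : MonoidAlgebra K G) • v
        one_smul := fun v => by
          show (single (1 : G) (1 : K) : MonoidAlgebra K G) • v = v
          rw [← MonoidAlgebra.one_def, one_smul]
        mul_smul := fun g h v => by
          show (single (g * h) (1 : K) : MonoidAlgebra K G) • v
            = (single g 1 : MonoidAlgebra K G) • (single h 1 : MonoidAlgebra K G) • v
          rw [smul_smul, MonoidAlgebra.single_mul_single, mul_one] }
    have hsmul_def : ∀ (g : G) (v : MonoidAlgebra K G ⧸ M),
        g • v = (single g (1 : K) : MonoidAlgebra K G) • v := fun _ _ => rfl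
    -- p divides the cardinality of the quotient
    have hp2 : 2 ≤ p := (Fact.out : p.Prime).two_le
    have hpV : p ∣ Nat.card (MonoidAlgebra K G ⧸ M) := by
      obtain ⟨v, hv⟩ := exists_ne (0 : MonoidAlgebra K G ⧸ M)
      have hpR : ((p : ℕ) : MonoidAlgebra K G) = 0 := by
        rw [← map_natCast (algebraMap K (MonoidAlgebra K G)) p, CharP.cast_eq_zero K p, map_zero]
      have hpv : p • v = 0 := by
        rw [← Nat.cast_smul_eq_nsmul (MonoidAlgebra K G) p v, hpR, zero_smul]
      have h1 : addOrderOf v ∣ p := addOrderOf_dvd_of_nsmul_eq_zero hpv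
      have h2 : addOrderOf v ≠ 1 := by
        simp only [ne_eq, AddMonoid.addOrderOf_eq_one_iff]
        exact hv
      have h3 : addOrderOf v = p :=
        ((Nat.Prime.eq_one_or_self_of_dvd Fact.out _ h1).resolve_left h2)
      exact h3 ▸ addOrderOf_dvd_natCard v
    -- fixed points
    have hfix := IsPGroup.card_modEq_card_fixedPoints hG (MonoidAlgebra K G ⧸ M)
    have hfixcard : p ∣ Nat.card (MulAction.fixedPoints G (MonoidAlgebra K G ⧸ M)) := by
      have := (Nat.modEq_zero_iff_dvd.mpr hpV).symm.trans hfix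
      exact Nat.modEq_zero_iff_dvd.mp this.symm
    have h0fix : (0 : MonoidAlgebra K G ⧸ M) ∈ MulAction.fixedPoints G (MonoidAlgebra K G ⧸ M) := by
      intro g
      rw [hsmul_def, smul_zero]
    haveI : Nontrivial (MulAction.fixedPoints G (MonoidAlgebra K G ⧸ M)) := by
      rw [← Finite.one_lt_card_iff_nontrivial]
      have h1 : 0 < Nat.card (MulAction.fixedPoints G (MonoidAlgebra K G ⧸ M)) :=
        Nat.card_pos_iff.mpr ⟨⟨⟨0, h0fix⟩⟩, Set.toFinite _⟩
      have h2 := Nat.le_of_dvd h1 hfixcard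
      omega
    obtain ⟨v₁, v₂, hv12⟩ := exists_pair_ne (MulAction.fixedPoints G (MonoidAlgebra K G ⧸ M))
    set u : MonoidAlgebra K G ⧸ M := v₁.1 - v₂.1 with hu
    have hu0 : u ≠ 0 := sub_ne_zero.mpr (fun h => hv12 (Subtype.ext h))
    have hufix : ∀ g : G, (single g (1 : K) : MonoidAlgebra K G) • u = u := by
      intro g
      rw [hu, smul_sub]
      rw [show (single g (1:K) : MonoidAlgebra K G) • v₁.1 = v₁.1 from v₁.2 g,
        show (single g (1:K) : MonoidAlgebra K G) • v₂.1 = v₂.1 from v₂.2 g]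
    -- every r acts on u by ε r
    have hact : ∀ r : MonoidAlgebra K G,
        r • u = algebraMap K (MonoidAlgebra K G) (stmt9eps K G r) • u := by
      intro r
      induction r using MonoidAlgebra.induction_on with
      | of g =>
        rw [show stmt9eps K G (MonoidAlgebra.of K G g) = 1 by
          rw [MonoidAlgebra.of_apply, stmt9eps_single], map_one, one_smul]
        exact hufix g
      | add f g hf hg => rw [add_smul, hf, hg, map_add, map_add, add_smul]
      | smul r f hf =>
        have h1 : stmt9eps K G (r • f) = r * stmt9eps K G f := by
          rw [map_smul, smul_eq_mul]
        rw [h1, Algebra.smul_def, mul_smul, hf, ← mul_smul, ← map_mul]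
    -- span of u is everything
    have hspan : Submodule.span (MonoidAlgebra K G) {u} = ⊤ := by
      rcases eq_bot_or_eq_top (Submodule.span (MonoidAlgebra K G) {u}) with h | h
      · exfalso
        apply hu0
        have : u ∈ Submodule.span (MonoidAlgebra K G) {u} := Submodule.mem_span_singleton_self u
        rw [h] at this
        simpa using this
      · exact h
    obtain ⟨x, hx⟩ : ∃ x : MonoidAlgebra K G, x • u = Submodule.Quotient.mk 1 := by
      have : (Submodule.Quotient.mk 1 : MonoidAlgebra K G ⧸ M)
          ∈ Submodule.span (MonoidAlgebra K G) {u} := hspan ▸ Submodule.mem_top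
      exact Submodule.mem_span_singleton.mp this
    -- conclude
    intro y hy
    rw [RingHom.mem_ker] at hy
    have key : Submodule.Quotient.mk (p := M) y = 0 := by
      have e1 : Submodule.Quotient.mk (p := M) y = y • (Submodule.Quotient.mk (p := M) 1) := by
        rw [← Submodule.Quotient.mk_smul, smul_eq_mul, mul_one]
      rw [e1, ← hx, smul_smul, hact (y * x), map_mul, hy, zero_mul, map_zero, zero_smul]
    rwa [Submodule.Quotient.mk_eq_zero] at key

lemma stmt9_deriv {K : Type*} [Field K] {G : Type*} [Group G] (d : G → K)
    (hd : ∀ g h : G, d (g * h) = d g + d h) (x y : MonoidAlgebra K G) :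
    stmt9L d (x * y)
      = stmt9L d x * stmt9eps K G y
        + stmt9eps K G x * stmt9L d y := by
  induction x using MonoidAlgebra.induction_on with
  | of g =>
    induction y using MonoidAlgebra.induction_on with
    | of h =>
      rw [show (MonoidAlgebra.of K G g) * (MonoidAlgebra.of K G h)
          = MonoidAlgebra.of K G (g * h) from (map_mul _ _ _).symm]
      simp only [MonoidAlgebra.of_apply, stmt9L_single, stmt9eps_single,
        one_smul, one_mul, mul_one]
      exact hd g h
    | add f₁ f₂ h1 h2 =>
      rw [mul_add, map_add, h1, h2, map_add, map_add]
      ring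
    | smul r f hf =>
      rw [mul_smul_comm, map_smul, map_smul, hf, map_smul, smul_eq_mul, smul_eq_mul,
        smul_eq_mul]
      ring
  | add f₁ f₂ h1 h2 =>
    rw [add_mul, map_add, h1, h2, map_add, map_add]
    ring
  | smul r f hf =>
    rw [smul_mul_assoc, map_smul, map_smul, hf, map_smul, smul_eq_mul, smul_eq_mul, smul_eq_mul]
    ring


/-- if `G` is a non-cyclic finite `p`-group and `K` a finite field of
characteristic `p`, then the Jacobson radical of `KG` is not a principal right ideal. -/
theorem stmt9 (p : ℕ) [Fact p.Prime] (K : Type*) [Field K] [Fintype K] [CharP K p]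
    (G : Type*) [Group G] [Fintype G] (hG : IsPGroup p G) (hnc : ¬ IsCyclic G) :
    ¬ ∃ a : MonoidAlgebra K G,
        ((⊥ : Ideal (MonoidAlgebra K G)).jacobson : Set (MonoidAlgebra K G)) =
          {x : MonoidAlgebra K G | ∃ b : MonoidAlgebra K G, x = a * b} := by
  classical
  rintro ⟨a, hset⟩
  obtain ⟨f, hf⟩ := stmt9_surj_aux p (Nat.card G) G le_rfl hG hnc
  -- two additive characters with values in K
  let d₁ : G → K := fun g => ZMod.castHom (dvd_refl p) K (Multiplicative.toAdd (f g).1)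
  let d₂ : G → K := fun g => ZMod.castHom (dvd_refl p) K (Multiplicative.toAdd (f g).2)
  have hd₁ : ∀ g h : G, d₁ (g * h) = d₁ g + d₁ h := by
    intro g h; simp [d₁, map_mul]
  have hd₂ : ∀ g h : G, d₂ (g * h) = d₂ g + d₂ h := by
    intro g h; simp [d₂, map_mul]
  set L₁ := stmt9L d₁ with hL₁
  set L₂ := stmt9L d₂ with hL₂
  -- a is in the augmentation ideal
  have haJ : a ∈ (⊥ : Ideal (MonoidAlgebra K G)).jacobson := by
    have : a ∈ {x : MonoidAlgebra K G | ∃ b, x = a * b} := ⟨1, (mul_one a).symm⟩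
    rw [← hset] at this
    exact this
  have hεa : stmt9eps K G a = 0 := by
    rw [stmt9_jacobson p K G hG] at haJ
    rwa [RingHom.mem_ker] at haJ
  -- key property: the (L₁, L₂)-image of the augmentation ideal is a line
  have key : ∀ y : MonoidAlgebra K G, stmt9eps K G y = 0 →
      ∃ t : K, L₁ y = t * L₁ a ∧ L₂ y = t * L₂ a := by
    intro y hy
    have hyJ : y ∈ ((⊥ : Ideal (MonoidAlgebra K G)).jacobson : Set (MonoidAlgebra K G)) := by
      rw [stmt9_jacobson p K G hG]
      show y ∈ RingHom.ker (stmt9eps K G : MonoidAlgebra K G →ₐ[K] K)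
      rwa [RingHom.mem_ker]
    rw [hset] at hyJ
    obtain ⟨b, rfl⟩ := hyJ
    refine ⟨stmt9eps K G b, ?_, ?_⟩
    · rw [hL₁, stmt9_deriv d₁ hd₁, hεa, zero_mul, add_zero, mul_comm]
    · rw [hL₂, stmt9_deriv d₂ hd₂, hεa, zero_mul, add_zero, mul_comm]
  -- pick group elements mapping to the standard generators
  obtain ⟨g₁, hg₁⟩ := hf (Multiplicative.ofAdd (1 : ZMod p), 1)
  obtain ⟨g₂, hg₂⟩ := hf (1, Multiplicative.ofAdd (1 : ZMod p))
  -- evaluate the characters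
  have hd11 : d₁ g₁ = 1 := by simp [d₁, hg₁]
  have hd21 : d₂ g₁ = 0 := by simp [d₂, hg₁]
  have hd12 : d₁ g₂ = 0 := by simp [d₁, hg₂]
  have hd22 : d₂ g₂ = 1 := by simp [d₂, hg₂]
  have hone : ∀ d : G → K, (∀ g h : G, d (g * h) = d g + d h) →
      stmt9L d (1 : MonoidAlgebra K G) = d 1 := by
    intro d hd
    rw [MonoidAlgebra.one_def]
    rw [stmt9L_single, one_smul]
  have hd1one : d₁ (1 : G) = 0 := by
    have := hd₁ 1 1
    rw [one_mul] at this
    exact left_eq_add.mp this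
  have hd2one : d₂ (1 : G) = 0 := by
    have := hd₂ 1 1
    rw [one_mul] at this
    exact left_eq_add.mp this
  have hεy : ∀ g : G, stmt9eps K G (single g 1 - 1 : MonoidAlgebra K G) = 0 := by
    intro g
    rw [map_sub, stmt9eps_single, map_one, sub_self]
  have hLval : ∀ (d : G → K) (hd : ∀ g h : G, d (g * h) = d g + d h) (hd1 : d 1 = 0) (g : G),
      stmt9L d (single g 1 - 1 : MonoidAlgebra K G) = d g := by
    intro d hd hd1 g
    rw [map_sub, hone d hd, hd1, sub_zero,
      stmt9L_single, one_smul]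
  obtain ⟨t₁, ht₁₁, ht₁₂⟩ := key (single g₁ 1 - 1 : MonoidAlgebra K G) (hεy g₁)
  obtain ⟨t₂, ht₂₁, ht₂₂⟩ := key (single g₂ 1 - 1 : MonoidAlgebra K G) (hεy g₂)
  rw [hL₁, hLval d₁ hd₁ hd1one g₁, hd11] at ht₁₁
  rw [hL₂, hLval d₂ hd₂ hd2one g₁, hd21] at ht₁₂
  rw [hL₁, hLval d₁ hd₁ hd1one g₂, hd12] at ht₂₁
  rw [hL₂, hLval d₂ hd₂ hd2one g₂, hd22] at ht₂₂
  -- contradiction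
  have ht₁0 : t₁ ≠ 0 := by
    intro h; rw [h, zero_mul] at ht₁₁; exact one_ne_zero ht₁₁
  have hL₂a : L₂ a = 0 := by
    rcases mul_eq_zero.mp ht₁₂.symm with h | h
    · exact absurd h ht₁0
    · exact h
  rw [hL₂a, mul_zero] at ht₂₂
  exact one_ne_zero ht₂₂
end

section
/- Let G be a finite group, K a finite field, and C a two-sided ideal of KG such that the quotient algebra KG/C is a Frobenius algebra. Then C is checkable: there exists a ∈ KG with C = {b ∈ KG : ab = 0} = ann_r(KGa). -/
/-- For a two-sided ideal `C` of a `K`-algebra `A`, the quotient algebra `A/C` is a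
Frobenius algebra: there is a `K`-linear functional on `A` vanishing on `C` (i.e. a
functional on `A/C`) whose kernel, viewed in `A/C`, contains no nonzero left or right
ideal.  Left/right ideals of `A/C` correspond to left/right ideals of `A` containing `C`. -/
def QuotientIsFrobenius (K : Type*) [Field K] (A : Type*) [Ring A] [Algebra K A]
    (C : Set A) : Prop :=
  ∃ lam : A →ₗ[K] K,
    (∀ c ∈ C, lam c = 0) ∧
    (∀ I : Submodule A A, C ⊆ I → (I : Set A) ⊆ {a : A | lam a = 0} → (I : Set A) ⊆ C) ∧
    (∀ I : Submodule Aᵐᵒᵖ A, C ⊆ I → (I : Set A) ⊆ {a : A | lam a = 0} → (I : Set A) ⊆ C)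

section Aux

variable {K : Type*} [Field K] {G : Type*} [Group G] [Fintype G]

/-- The standard symmetric functional on the group algebra: coefficient at `1`. -/
noncomputable def lam0 : MonoidAlgebra K G →ₗ[K] K := (Finsupp.lapply 1).comp (MonoidAlgebra.coeffLinearEquiv K).toLinearMap

lemma lam0_apply (x : MonoidAlgebra K G) : lam0 x = x.coeff 1 := rfl

lemma lam0_nondeg {y : MonoidAlgebra K G} (h : ∀ x : MonoidAlgebra K G, (x * y).coeff 1 = 0) :
    y = 0 := by
  ext g
  have := h (MonoidAlgebra.single g⁻¹ 1)
  rw [MonoidAlgebra.single_mul_apply] at this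
  simpa using this

lemma lam0_comm (x y : MonoidAlgebra K G) : (x * y).coeff 1 = (y * x).coeff 1 := by
  classical
  have hs : ∀ {p : G × G}, p ∈ Finset.univ.filter (fun p : G × G => p.1 * p.2 = 1) ↔
      p.1 * p.2 = 1 := by
    intro p; simp
  rw [MonoidAlgebra.mul_apply_antidiagonal x y 1 _ hs,
    MonoidAlgebra.mul_apply_antidiagonal y x 1 _ hs]
  refine Finset.sum_nbij' (fun p => Prod.swap p) (fun p => Prod.swap p) ?_ ?_ ?_ ?_ ?_
  · intro p hp
    simp only [Finset.mem_filter, Finset.mem_univ, true_and] at hp ⊢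
    show p.2 * p.1 = 1
    rw [mul_eq_one_iff_eq_inv.mp hp]
    exact mul_inv_cancel p.2
  · intro p hp
    simp only [Finset.mem_filter, Finset.mem_univ, true_and] at hp ⊢
    show p.2 * p.1 = 1
    rw [mul_eq_one_iff_eq_inv.mp hp]
    exact mul_inv_cancel p.2
  · intro p _; rfl
  · intro p _; rfl
  · intro p _; exact mul_comm _ _

/-- The map `a ↦ (x ↦ (x*a) 1)` from the group algebra to its dual. -/
noncomputable def Phi : MonoidAlgebra K G →ₗ[K] Module.Dual K (MonoidAlgebra K G) where
  toFun a := lam0.comp (LinearMap.mulRight K a)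
  map_add' a b := LinearMap.ext fun x => by
    simp only [LinearMap.coe_comp, Function.comp_apply, LinearMap.mulRight_apply, mul_add,
      map_add, LinearMap.add_apply]
  map_smul' c a := LinearMap.ext fun x => by
    simp only [LinearMap.coe_comp, Function.comp_apply, LinearMap.mulRight_apply,
      mul_smul_comm, map_smul, RingHom.id_apply, LinearMap.smul_apply]

lemma Phi_apply (a x : MonoidAlgebra K G) : Phi a x = (x * a).coeff 1 := rfl

lemma Phi_surjective : Function.Surjective (Phi (K := K) (G := G)) := by
  haveI : Module.Finite K (MonoidAlgebra K G) :=
    Module.Finite.equiv ((Finsupp.linearEquivFunOnFinite K K G).symm.trans (MonoidAlgebra.coeffLinearEquiv K).symm)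
  rw [← LinearMap.injective_iff_surjective_of_finrank_eq_finrank
    (Subspace.dual_finrank_eq (K := K) (V := MonoidAlgebra K G)).symm]
  intro a b hab
  have h : a - b = 0 := by
    apply lam0_nondeg
    intro x
    have := congrArg (fun f => f x) hab
    simp only [Phi_apply] at this
    have hsub : (x * (a - b)).coeff 1 = (x * a).coeff 1 - (x * b).coeff 1 := by
      rw [mul_sub, MonoidAlgebra.coeff_sub]; exact Finsupp.sub_apply _ _ _
    rw [hsub, this, sub_self]
  exact sub_eq_zero.mp h

end Aux

/-- if `C` is a two-sided ideal of the group algebra `KG` (a left ideal that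
is also closed under right multiplication) such that `KG/C` is a Frobenius algebra, then
`C` is checkable: `C = ann_r(KGa) = {b | a * b = 0}` for some `a ∈ KG`. -/
theorem stmt12 (K : Type*) [Field K] [Fintype K] (G : Type*) [Group G] [Fintype G]
    (C : Submodule (MonoidAlgebra K G) (MonoidAlgebra K G))
    (hright : ∀ c ∈ C, ∀ b : MonoidAlgebra K G, c * b ∈ C)
    (hFrob : QuotientIsFrobenius K (MonoidAlgebra K G) (C : Set (MonoidAlgebra K G))) :
    ∃ a : MonoidAlgebra K G,
      (C : Set (MonoidAlgebra K G)) = {b : MonoidAlgebra K G | a * b = 0} := by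
  obtain ⟨lam, hlamC, _hleft, hrightIdeal⟩ := hFrob
  obtain ⟨a, ha⟩ := Phi_surjective lam
  have haX : ∀ x : MonoidAlgebra K G, (x * a).coeff 1 = lam x := fun x =>
    congrArg (fun f => f x) ha
  refine ⟨a, ?_⟩
  -- C ⊆ ann_r(a)
  have key : ∀ c ∈ C, a * c = 0 := by
    intro c hc
    apply lam0_nondeg
    intro x
    calc (x * (a * c)).coeff 1 = ((x * a) * c).coeff 1 := by rw [mul_assoc]
      _ = (c * (x * a)).coeff 1 := lam0_comm _ _
      _ = ((c * x) * a).coeff 1 := by rw [mul_assoc]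
      _ = lam (c * x) := haX _
      _ = 0 := hlamC _ (hright c hc x)
  -- the right ideal ann_r(a)
  let D : Submodule (MonoidAlgebra K G)ᵐᵒᵖ (MonoidAlgebra K G) :=
    { carrier := {b | a * b = 0}
      add_mem' := by intro b c hb hc; simp only [Set.mem_setOf_eq] at *; rw [mul_add, hb, hc, add_zero]
      zero_mem' := by simp
      smul_mem' := by
        intro c b hb
        simp only [Set.mem_setOf_eq, MulOpposite.smul_eq_mul_unop] at *
        rw [← mul_assoc, hb, zero_mul] }
  have hCD : (C : Set (MonoidAlgebra K G)) ⊆ D := fun c hc => key c hc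
  have hDker : (D : Set (MonoidAlgebra K G)) ⊆ {x | lam x = 0} := by
    intro b hb
    have hab : a * b = 0 := hb
    show lam b = 0
    rw [← haX b, lam0_comm, hab]
    exact Finsupp.zero_apply
  have hDC := hrightIdeal D hCD hDker
  exact Set.Subset.antisymm hCD hDC
end

section
/- Let G be a finite group, K a finite field, and B a block (indecomposable two-sided direct summand) of KG with block idempotent f, so KG = B ⊕ B' with B = fKG. A right ideal C of KG is checkable in KG if and only if, writing C = Cf ⊕ C(1-f), each block component Cf is checkable inside the algebra B and C(1-f) is checkable inside B' (i.e., Cf = {b ∈ B : (fa)b = 0} for some a ∈ KG, and similarly for the complement). -/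
/-!
A central idempotent `e` splits every element as `x = e x + (1 - e) x`, and a right ideal `C`
contains `x` exactly when it contains both components. Since `e` is central, the annihilator
condition also splits: `(e a + (1 - e) a') x = 0` iff `e a x = 0` and `(1 - e) a' x = 0`.
So `C = ann(v)` gives the component annihilators `e v` and `(1 - e) v`, and conversely
annihilators `e a` and `(1 - e) a'` of the components glue to the annihilator `e a + (1 - e) a'`.
-/

section

variable {R : Type*} [Ring R] {C : Submodule Rᵐᵒᵖ R} {e : R}

theorem mem_iff_mul_mem_and_one_sub_mul_mem (hc : ∀ x, Commute e x) (x : R) :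
    x ∈ C ↔ e * x ∈ C ∧ (1 - e) * x ∈ C := by
  refine ⟨fun hx => ⟨?_, ?_⟩, fun ⟨h₁, h₂⟩ => ?_⟩
  · rw [(hc x).eq]
    exact C.smul_mem (.op e) hx
  · rw [((Commute.one_left x).sub_left (hc x)).eq]
    exact C.smul_mem (.op (1 - e)) hx
  · simpa only [← add_mul, add_sub_cancel, one_mul] using C.add_mem h₁ h₂

theorem IsIdempotentElem.mul_add_one_sub_mul_eq_zero_iff (he : IsIdempotentElem e) (y z : R) :
    e * y + (1 - e) * z = 0 ↔ e * y = 0 ∧ (1 - e) * z = 0 := by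
  refine ⟨fun h => ⟨?_, ?_⟩, fun ⟨h₁, h₂⟩ => by rw [h₁, h₂, add_zero]⟩
  · simpa only [mul_add, ← mul_assoc, he.eq, he.mul_one_sub_self, zero_mul, add_zero,
      mul_zero] using congrArg (e * ·) h
  · simpa only [mul_add, ← mul_assoc, he.one_sub.eq, he.one_sub_mul_self, zero_mul, zero_add,
      mul_zero] using congrArg ((1 - e) * ·) h

theorem IsIdempotentElem.exists_eq_mul_iff (he : IsIdempotentElem e) (b : R) :
    (∃ y, b = e * y) ↔ e * b = b :=
  ⟨fun ⟨y, hy⟩ => by rw [hy, ← mul_assoc, he.eq], fun h => ⟨b, h.symm⟩⟩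

theorem component_eq_annihilator_iff (he : IsIdempotentElem e) (hc : ∀ x, Commute e x) (a : R) :
    {x | ∃ c ∈ C, x = c * e} = {b | (∃ y, b = e * y) ∧ e * a * b = 0} ↔
      ∀ x, e * x ∈ C ↔ e * a * x = 0 := by
  have mul_mul_corner (x : R) : e * a * (e * x) = e * a * x := by
    rw [← mul_assoc, mul_assoc e, ← (hc a).eq, ← mul_assoc, he.eq]
  have mem_component (x : R) : (∃ c ∈ C, x = c * e) ↔ e * x = x ∧ x ∈ C := by
    refine ⟨fun ⟨c, hcC, hx⟩ => ?_, fun ⟨hex, hx⟩ => ⟨x, hx, by rw [← (hc x).eq, hex]⟩⟩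
    subst hx
    refine ⟨by rw [(hc _).eq, mul_assoc, he.eq], C.smul_mem (.op e) hcC⟩
  simp only [Set.ext_iff, Set.mem_ofPred_eq, mem_component, he.exists_eq_mul_iff]
  refine ⟨fun h x => ?_, fun h x => and_congr_right fun hex => ?_⟩
  · simpa only [he.eq, ← mul_assoc, true_and, mul_mul_corner] using h (e * x)
  · rw [← h, hex]

theorem mul_mem_iff_of_annihilator (hc : ∀ x, Commute e x) {v : R}
    (hC : ∀ x, x ∈ C ↔ v * x = 0) (x : R) : e * x ∈ C ↔ e * v * x = 0 := by
  rw [hC, ← mul_assoc, (hc v).eq]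

theorem mem_iff_of_mul_mem_iff (he : IsIdempotentElem e) (hc : ∀ x, Commute e x) {a a' : R}
    (h : ∀ x, e * x ∈ C ↔ e * a * x = 0) (h' : ∀ x, (1 - e) * x ∈ C ↔ (1 - e) * a' * x = 0)
    (x : R) : x ∈ C ↔ (e * a + (1 - e) * a') * x = 0 := by
  rw [mem_iff_mul_mem_and_one_sub_mul_mem hc, h, h', add_mul, mul_assoc, mul_assoc,
    he.mul_add_one_sub_mul_eq_zero_iff]

end

theorem stmt18_general (K : Type*) [Field K] (G : Type*) [Group G]
    (f : MonoidAlgebra K G) (hidem : f * f = f)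
    (hcentral : ∀ x : MonoidAlgebra K G, f * x = x * f)
    (C : Submodule (MonoidAlgebra K G)ᵐᵒᵖ (MonoidAlgebra K G)) :
    (∃ v : MonoidAlgebra K G,
        (C : Set (MonoidAlgebra K G)) = {a : MonoidAlgebra K G | v * a = 0}) ↔
      ((∃ a : MonoidAlgebra K G,
          {x : MonoidAlgebra K G | ∃ c ∈ C, x = c * f} =
            {b : MonoidAlgebra K G |
              (∃ y : MonoidAlgebra K G, b = f * y) ∧ (f * a) * b = 0}) ∧
       (∃ a : MonoidAlgebra K G,
          {x : MonoidAlgebra K G | ∃ c ∈ C, x = c * (1 - f)} =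
            {b : MonoidAlgebra K G |
              (∃ y : MonoidAlgebra K G, b = (1 - f) * y) ∧ ((1 - f) * a) * b = 0})) := by
  have he : IsIdempotentElem f := hidem
  have hc : ∀ x, Commute f x := hcentral
  have hc' : ∀ x, Commute (1 - f) x := fun x => (Commute.one_left x).sub_left (hc x)
  simp only [component_eq_annihilator_iff he hc, component_eq_annihilator_iff he.one_sub hc',
    Set.ext_iff, SetLike.mem_coe, Set.mem_ofPred_eq]
  constructor
  · rintro ⟨v, hv⟩
    exact ⟨⟨v, mul_mem_iff_of_annihilator hc hv⟩, ⟨v, mul_mem_iff_of_annihilator hc' hv⟩⟩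
  · rintro ⟨⟨a, ha⟩, ⟨a', ha'⟩⟩
    exact ⟨f * a + (1 - f) * a', mem_iff_of_mul_mem_iff he hc ha ha'⟩

/-- let `f` be a central idempotent of `KG` giving a decomposition
`KG = B ⊕ B'` with `B = fKG` and `B' = (1-f)KG` (for instance a block idempotent).
A right ideal `C` of `KG` is checkable in `KG` iff the component `Cf` is checkable
inside the algebra `B` and the component `C(1-f)` is checkable inside `B'`. -/
theorem stmt18 (K : Type*) [Field K] [Fintype K] (G : Type*) [Group G] [Fintype G]
    (f : MonoidAlgebra K G) (hidem : f * f = f)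
    (hcentral : ∀ x : MonoidAlgebra K G, f * x = x * f)
    (C : Submodule (MonoidAlgebra K G)ᵐᵒᵖ (MonoidAlgebra K G)) :
    (∃ v : MonoidAlgebra K G,
        (C : Set (MonoidAlgebra K G)) = {a : MonoidAlgebra K G | v * a = 0}) ↔
      ((∃ a : MonoidAlgebra K G,
          {x : MonoidAlgebra K G | ∃ c ∈ C, x = c * f} =
            {b : MonoidAlgebra K G |
              (∃ y : MonoidAlgebra K G, b = f * y) ∧ (f * a) * b = 0}) ∧
       (∃ a : MonoidAlgebra K G,
          {x : MonoidAlgebra K G | ∃ c ∈ C, x = c * (1 - f)} =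
            {b : MonoidAlgebra K G |
              (∃ y : MonoidAlgebra K G, b = (1 - f) * y) ∧ ((1 - f) * a) * b = 0})) :=
  stmt18_general K G f hidem hcentral C
end

section
/- Let A be a finite-dimensional algebra over a finite field K in which every left ideal is principal, let J = J(A) be the Jacobson radical, and let M be an irreducible left A-module with projective cover P(M). Then for every k ≥ 1, the socle of P(M)/J^k P(M) is a cyclic A-module (a quotient of A/J generated by one element), i.e., soc(P(M)/J^k P(M)) embeds as a submodule into A/JA. -/
/-- Iterated action of an ideal on a module: `idealSmulPow J P k` is the submodule
`J^k • P` of `P`. -/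
def idealSmulPow {A : Type*} [Ring A] (J : Ideal A) (P : Type*) [AddCommGroup P]
    [Module A P] : ℕ → Submodule A P
  | 0 => ⊤
  | (k + 1) => Submodule.span A {x : P | ∃ a ∈ J, ∃ y ∈ idealSmulPow J P k, x = a • y}

/-- The socle of a module: the supremum of all its simple submodules. -/
def moduleSocle (A : Type*) [Ring A] (Q : Type*) [AddCommGroup Q] [Module A Q] :
    Submodule A Q :=
  sSup {N : Submodule A Q | IsSimpleModule A N}

open Submodule LinearMap

/-- A simple module is semisimple. -/
theorem aux_simple_isSemisimple {A : Type*} [Ring A] (M : Type*) [AddCommGroup M]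
    [Module A M] [IsSimpleModule A M] : IsSemisimpleModule A M :=
  IsSemisimpleModule.of_sSup_simples_eq_top (top_unique (le_sSup
    (show IsSimpleModule A (⊤ : Submodule A M) from .congr Submodule.topEquiv)))

/-- Over a left artinian ring, the Jacobson radical is a finite intersection of
maximal left ideals. -/
theorem aux_jacobson_finset_inf (A : Type*) [Ring A] [IsArtinian A A] :
    ∃ s : Finset (Ideal A), (∀ m ∈ s, m.IsMaximal) ∧
      ((⊥ : Ideal A).jacobson = s.inf _root_.id) := by
  classical
  obtain ⟨I₀, hI₀T, hmin⟩ := IsArtinian.set_has_minimal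
    {I : Ideal A | ∃ s : Finset (Ideal A), (∀ m ∈ s, m.IsMaximal) ∧ I = s.inf _root_.id}
    ⟨⊤, ∅, by simp, by simp⟩
  obtain ⟨s, hs, rfl⟩ := hI₀T
  refine ⟨s, hs, le_antisymm (Finset.le_inf fun m hm => sInf_le ⟨bot_le, hs m hm⟩)
    (le_sInf ?_)⟩
  rintro m ⟨-, hmax⟩
  by_contra hle
  have hlt : s.inf _root_.id ⊓ m < s.inf _root_.id :=
    lt_of_le_of_ne inf_le_left (fun h => hle (h ▸ inf_le_right))
  refine hmin _ ⟨insert m s, ?_, ?_⟩ hlt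
  · intro m' hm'
    rcases Finset.mem_insert.mp hm' with rfl | h
    exacts [hmax, hs m' h]
  · rw [Finset.inf_insert, inf_comm]
    rfl

/-- Over a left artinian ring, `A / J(A)` is a semisimple module. -/
theorem aux_semisimple_quot_jacobson (A : Type*) [Ring A] [IsArtinian A A] :
    IsSemisimpleModule A (A ⧸ ((⊥ : Ideal A).jacobson)) := by
  classical
  obtain ⟨s, hs, hJ⟩ := aux_jacobson_finset_inf A
  haveI hsimple : ∀ m : s, IsSimpleModule A (A ⧸ (m : Ideal A)) := fun m =>
    (isSimpleModule_iff_isCoatom).mpr (Ideal.isMaximal_def.mp (hs m m.2))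
  haveI : IsSemisimpleModule A (∀ m : s, A ⧸ (m : Ideal A)) := by
    haveI : ∀ m : s, IsSemisimpleModule A (A ⧸ (m : Ideal A)) := fun m =>
      aux_simple_isSemisimple _
    exact isSemisimpleModule_of_isSemisimpleModule_submodule'
      (p := fun m : s => LinearMap.range (LinearMap.single A _ m))
      (fun m => IsSemisimpleModule.range _)
      (LinearMap.iSup_range_single A _)
  let g : A →ₗ[A] (∀ m : s, A ⧸ (m : Ideal A)) := LinearMap.pi fun m => ((m : Ideal A)).mkQ
  have hker : LinearMap.ker g = (⊥ : Ideal A).jacobson := by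
    rw [LinearMap.ker_pi, hJ]
    simp only [Submodule.ker_mkQ]
    exact le_antisymm (Finset.le_inf fun m hm => iInf_le (fun i : s => (i : Ideal A)) ⟨m, hm⟩)
      (le_iInf fun m => Finset.inf_le m.2)
  haveI : IsSemisimpleModule A (LinearMap.range g) := inferInstance
  have e : (A ⧸ ((⊥ : Ideal A).jacobson)) ≃ₗ[A] LinearMap.range g :=
    (Submodule.quotEquivOfEq _ _ hker.symm) ≪≫ₗ (LinearMap.quotKerEquivRange g)
  exact IsSemisimpleModule.congr (M := LinearMap.range g) e

/-- let `A` be a finite-dimensional algebra over a finite field in which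
every left ideal is principal, `J = J(A)` its Jacobson radical, `M` an irreducible left
`A`-module with projective cover `P` (a projective module with an essential epimorphism
onto `M`). Then for every `k ≥ 1` the socle of `P / J^k P` is a cyclic `A`-module and
embeds as a submodule into `A/JA`. -/
theorem stmt19 (K : Type*) [Field K] [Fintype K] (A : Type*) [Ring A] [Algebra K A]
    [FiniteDimensional K A]
    (hprin : ∀ I : Submodule A A, ∃ v : A, (I : Set A) = {x : A | ∃ b : A, x = b * v})
    (M : Type*) [AddCommGroup M] [Module A M] [IsSimpleModule A M]
    (P : Type*) [AddCommGroup P] [Module A P] (hproj : Module.Projective A P)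
    (π : P →ₗ[A] M) (hsurj : Function.Surjective π)
    (hess : ∀ N : Submodule A P, N ⊔ LinearMap.ker π = ⊤ → N = ⊤)
    (k : ℕ) (hk : 1 ≤ k) :
    (∃ x : P ⧸ idealSmulPow ((⊥ : Ideal A).jacobson) P k,
        moduleSocle A (P ⧸ idealSmulPow ((⊥ : Ideal A).jacobson) P k) =
          Submodule.span A {x}) ∧
      ∃ g : moduleSocle A (P ⧸ idealSmulPow ((⊥ : Ideal A).jacobson) P k) →ₗ[A]
          A ⧸ ((⊥ : Ideal A).jacobson),
        Function.Injective g := by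
  classical
  set J : Ideal A := (⊥ : Ideal A).jacobson with hJdef
  haveI : Nontrivial M := IsSimpleModule.nontrivial A M
  haveI : Nontrivial A := by
    by_contra h
    rw [not_nontrivial_iff_subsingleton] at h
    haveI := Module.subsingleton A M
    exact not_subsingleton M inferInstance
  haveI : IsArtinian A A := isArtinian_of_tower K isArtinian_of_fg_of_artinian'
  -- P is cyclic
  obtain ⟨m0, hm0⟩ := exists_ne (0 : M)
  obtain ⟨p, hp⟩ := hsurj m0
  have hspanP : Submodule.span A {p} = ⊤ := by
    apply hess
    rw [eq_top_iff]
    rintro z -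
    have hzM : π z ∈ Submodule.span A {m0} := by
      rw [IsSimpleModule.span_singleton_eq_top A hm0]; trivial
    obtain ⟨c, hc⟩ := Submodule.mem_span_singleton.mp hzM
    have hz : z = c • p + (z - c • p) := by abel
    rw [hz]
    refine Submodule.add_mem_sup (Submodule.smul_mem _ c (Submodule.mem_span_singleton_self p)) ?_
    rw [LinearMap.mem_ker, map_sub, map_smul, hp, hc, sub_self]
  -- the quotient is cyclic
  set mk := (idealSmulPow J P k).mkQ with hmkdef
  set q0 : P ⧸ idealSmulPow J P k := mk p with hq0def
  have hq0 : Submodule.span A {q0} = ⊤ := by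
    have h1 := Submodule.map_span mk {p}
    rw [Set.image_singleton] at h1
    rw [hq0def, ← h1, hspanP, Submodule.map_top, Submodule.range_mkQ]
  -- every submodule of the quotient is cyclic
  have hcyc : ∀ N : Submodule A (P ⧸ idealSmulPow J P k),
      ∃ x, N = Submodule.span A {x} := by
    intro N
    set φ : A →ₗ[A] (P ⧸ idealSmulPow J P k) :=
      LinearMap.toSpanSingleton A _ q0 with hφdef
    have hφ : Function.Surjective φ := by
      rw [← LinearMap.range_eq_top, ← LinearMap.span_singleton_eq_range]
      exact hq0
    obtain ⟨v, hv⟩ := hprin (Submodule.comap φ N)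
    have hIv : Submodule.comap φ N = Submodule.span A {v} := SetLike.ext' (by
      rw [hv]
      ext b
      simp only [Set.mem_setOf_eq, SetLike.mem_coe, Submodule.mem_span_singleton,
        smul_eq_mul, eq_comm])
    refine ⟨φ v, ?_⟩
    rw [← Submodule.map_comap_eq_of_surjective hφ N, hIv, Submodule.map_span,
      Set.image_singleton]
  obtain ⟨x, hx⟩ := hcyc (moduleSocle A (P ⧸ idealSmulPow J P k))
  refine ⟨⟨x, hx⟩, ?_⟩
  -- J kills the socle
  have hkill : ∀ a ∈ J, ∀ y ∈ moduleSocle A (P ⧸ idealSmulPow J P k),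
      a • y = 0 := by
    intro a ha y hy
    rw [moduleSocle, sSup_eq_iSup'] at hy
    refine Submodule.iSup_induction (motive := fun y => a • y = 0) _ hy ?_ (by simp) ?_
    · rintro ⟨N, hN⟩ z hz
      haveI : IsSimpleModule A N := hN
      by_cases h0 : z = 0
      · simp [h0]
      · have hz0 : (⟨z, hz⟩ : N) ≠ 0 := by
          simp only [ne_eq, Submodule.mk_eq_zero]; exact h0
        have hsurj' := IsSimpleModule.toSpanSingleton_surjective A hz0
        have hmax : Ideal.IsMaximal (LinearMap.ker (LinearMap.toSpanSingleton A N ⟨z, hz⟩)) :=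
          Ideal.isMaximal_def.mpr (LinearMap.isCoatom_ker_of_surjective hsurj')
        have hker : a ∈ LinearMap.ker (LinearMap.toSpanSingleton A N ⟨z, hz⟩) :=
          Submodule.mem_sInf.mp ha _ ⟨bot_le, hmax⟩
        have h1 : a • (⟨z, hz⟩ : N) = 0 := hker
        have := congrArg (Subtype.val) h1
        simpa using this
    · intro y1 y2 h1 h2
      rw [smul_add, h1, h2, add_zero]
  -- build the embedding
  set S := moduleSocle A (P ⧸ idealSmulPow J P k) with hSdef
  set s0 : S := ⟨x, by rw [hx]; exact Submodule.mem_span_singleton_self x⟩ with hs0def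
  set ψ : A →ₗ[A] S := LinearMap.toSpanSingleton A S s0 with hψdef
  have hψ : Function.Surjective ψ := by
    rw [← LinearMap.range_eq_top, ← LinearMap.span_singleton_eq_range]
    apply Submodule.map_injective_of_injective S.injective_subtype
    rw [Submodule.map_span, Set.image_singleton, Submodule.map_top, Submodule.range_subtype]
    show Submodule.span A {x} = S
    exact hx.symm
  have hJker : J ≤ LinearMap.ker ψ := by
    intro a ha
    rw [LinearMap.mem_ker]
    exact Subtype.ext (hkill a ha x s0.2)
  haveI : IsSemisimpleModule A (A ⧸ J) := aux_semisimple_quot_jacobson A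
  obtain ⟨c, hc⟩ := exists_isCompl (Submodule.map J.mkQ (LinearMap.ker ψ))
  let e1 : S ≃ₗ[A] A ⧸ LinearMap.ker ψ := (LinearMap.quotKerEquivOfSurjective ψ hψ).symm
  let e2 : (A ⧸ LinearMap.ker ψ) ≃ₗ[A] (A ⧸ J) ⧸ (Submodule.map J.mkQ (LinearMap.ker ψ)) :=
    (Submodule.quotientQuotientEquivQuotient J (LinearMap.ker ψ) hJker).symm
  let e3 := Submodule.quotientEquivOfIsCompl _ c hc
  refine ⟨c.subtype ∘ₗ (e3.toLinearMap ∘ₗ (e2.toLinearMap ∘ₗ e1.toLinearMap)), ?_⟩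
  exact c.injective_subtype.comp (e3.injective.comp (e2.injective.comp e1.injective))
end
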